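/- A word w over the alphabet {1,2} lies in C(1) if and only if w is Yamanouchi, i.e., every suffix of w contains at least as many 1's as 2's. -/

import Mathlib

/-!
Read a word in `1, 2` from right to left, pairing each `2` with a still unpaired `1` to its
right, and let `(m₁, m₂)` be the numbers of `1`s and `2`s left unpaired. This pair is invariant
under the only Knuth moves on two letters, `121 ↔ 211` and `212 ↔ 221`; conversely every such word
is Knuth equivalent to `2^(c₁ - m₁) 1^c₁ 2^m₂`, where `c₁` counts its `1`s. So two words are
Knuth equivalent iff they have the same content and the same `(m₁, m₂)`. Prepending `1` to `w`
gives `(m₁ + 1, m₂)`, while appending it cancels an unpaired `2` if there is one; hence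
`1w ≡ w1` iff `m₂ = 0`, which is the Yamanouchi condition.
-/

namespace Plactic

/-- Insert `x` into a weakly increasing row, returning the new row and the bumped entry. -/
def rowInsert (x : ℕ) : List ℕ → List ℕ × Option ℕ
  | [] => ([x], none)
  | y :: ys =>
    if x < y then (x :: ys, some y)
    else
      let p := rowInsert x ys
      (y :: p.1, p.2)

/-- RSK insertion of `x` into a tableau given as a list of rows. -/
def tInsert (x : ℕ) : List (List ℕ) → List (List ℕ)
  | [] => [[x]]
  | r :: rs =>
    match rowInsert x r with
    | (r', none) => r' :: rs
    | (r', some y) => r' :: tInsert y rs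

/-- The RSK insertion tableau of a word. -/
def P (w : List ℕ) : List (List ℕ) := w.foldl (fun t x => tInsert x t) []

/-- The `i`-th row (0-indexed) of the insertion tableau of `w`. -/
def row (w : List ℕ) (i : ℕ) : List ℕ := (P w).getD i []

/-- The `j`-th column (0-indexed) of a tableau, read top to bottom. -/
def col (T : List (List ℕ)) (j : ℕ) : List ℕ := T.filterMap (fun r => r[j]?)

/-- An elementary Knuth transposition. -/
inductive KStep : List ℕ → List ℕ → Prop
  | k1 (x y : List ℕ) (a b c : ℕ) : a ≤ b → b < c →
      KStep (x ++ [a, c, b] ++ y) (x ++ [c, a, b] ++ y)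
  | k2 (x y : List ℕ) (a b c : ℕ) : a < b → b ≤ c →
      KStep (x ++ [b, a, c] ++ y) (x ++ [b, c, a] ++ y)

/-- Knuth equivalence: the equivalence relation generated by Knuth transpositions. -/
def KEquiv : List ℕ → List ℕ → Prop := Relation.EqvGen KStep

/-- The centralizer of `u` in the plactic monoid. -/
def Cent (u : List ℕ) : Set (List ℕ) := {w | KEquiv (u ++ w) (w ++ u)}

lemma KEquiv.refl (u : List ℕ) : KEquiv u u := Relation.EqvGen.refl u

lemma KEquiv.symm {u v : List ℕ} (h : KEquiv u v) : KEquiv v u := Relation.EqvGen.symm _ _ h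

lemma KEquiv.trans {u v w : List ℕ} (h : KEquiv u v) (h' : KEquiv v w) : KEquiv u w :=
  Relation.EqvGen.trans _ _ _ h h'

lemma KStep.kEquiv {u v : List ℕ} (h : KStep u v) : KEquiv u v := Relation.EqvGen.rel _ _ h

lemma KStep.append_append {u v : List ℕ} (h : KStep u v) (l r : List ℕ) :
    KStep (l ++ u ++ r) (l ++ v ++ r) := by
  cases h with
  | k1 x y a b c hab hbc => simpa using KStep.k1 (l ++ x) (y ++ r) a b c hab hbc
  | k2 x y a b c hab hbc => simpa using KStep.k2 (l ++ x) (y ++ r) a b c hab hbc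

lemma KEquiv.append_append {u v : List ℕ} (h : KEquiv u v) (l r : List ℕ) :
    KEquiv (l ++ u ++ r) (l ++ v ++ r) := by
  induction h with
  | rel x y hxy => exact (hxy.append_append l r).kEquiv
  | refl x => exact KEquiv.refl _
  | symm x y _ ih => exact ih.symm
  | trans x y z _ _ ih₁ ih₂ => exact ih₁.trans ih₂

lemma KEquiv.cons {u v : List ℕ} (x : ℕ) (h : KEquiv u v) : KEquiv (x :: u) (x :: v) := by
  simpa using h.append_append [x] []

lemma KStep.perm {u v : List ℕ} (h : KStep u v) : u.Perm v := by
  cases h with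
  | k1 x y a b c => exact (List.Perm.swap c a [b]).append_left x |>.append_right y
  | k2 x y a b c => exact ((List.Perm.swap c a []).cons b).append_left x |>.append_right y

lemma KEquiv.perm {u v : List ℕ} (h : KEquiv u v) : u.Perm v :=
  (List.Perm.eqv _).eqvGen_iff.mp (Relation.EqvGen.mono (fun _ _ => KStep.perm) _ _ h)

lemma kEquiv_121 : KEquiv [1, 2, 1] [2, 1, 1] := (KStep.k1 [] [] 1 1 2 le_rfl one_lt_two).kEquiv

lemma kEquiv_212 : KEquiv [2, 1, 2] [2, 2, 1] := (KStep.k2 [] [] 1 2 2 one_lt_two le_rfl).kEquiv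

instance : Trans KEquiv KEquiv KEquiv := ⟨KEquiv.trans⟩

lemma kEquiv_two_one_replicate (r : ℕ) :
    KEquiv (2 :: 1 :: List.replicate r 2) (2 :: (List.replicate r 2 ++ [1])) := by
  induction r with
  | zero => exact KEquiv.refl _
  | succ r ih =>
    calc KEquiv _ (2 :: 2 :: 1 :: List.replicate r 2) := by
          simpa [List.replicate_succ] using kEquiv_212.append_append [] (List.replicate r 2)
      KEquiv _ _ := by simpa [List.replicate_succ] using ih.append_append [2] []

lemma kEquiv_one_cons_replicate {r p : ℕ} (h : r ≤ p) :
    KEquiv (1 :: (List.replicate r 2 ++ List.replicate p 1))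
      (List.replicate r 2 ++ List.replicate (p + 1) 1) := by
  induction r generalizing p with
  | zero => exact KEquiv.refl _
  | succ r ih =>
    obtain ⟨p, rfl⟩ := Nat.exists_eq_add_of_lt h
    have ih := ih (Nat.le_add_right r p)
    calc KEquiv _ (1 :: 2 :: 1 :: (List.replicate r 2 ++ List.replicate (r + p) 1)) := by
          simpa [List.replicate_succ] using ih.symm.append_append [1, 2] []
      KEquiv _ (2 :: 1 :: 1 :: (List.replicate r 2 ++ List.replicate (r + p) 1)) :=
          kEquiv_121.append_append [] _
      KEquiv _ (2 :: 1 :: (List.replicate r 2 ++ List.replicate (r + p + 1) 1)) := by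
          simpa using ih.append_append [2, 1] []
      KEquiv _ _ := by
          simpa [List.replicate_succ] using
            (kEquiv_two_one_replicate r).append_append [] (List.replicate (r + p + 1) 1)

lemma kEquiv_replicate_two_succ (p : ℕ) :
    KEquiv (List.replicate (p + 1) 2 ++ List.replicate p 1)
      (List.replicate p 2 ++ List.replicate p 1 ++ [2]) := by
  induction p with
  | zero => exact KEquiv.refl _
  | succ p ih =>
    calc KEquiv _ (2 :: 1 :: (List.replicate (p + 1) 2 ++ List.replicate p 1)) := by
          simpa [List.replicate_succ] using
            (kEquiv_two_one_replicate (p + 1)).symm.append_append [] (List.replicate p 1)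
      KEquiv _ (2 :: 1 :: (List.replicate p 2 ++ List.replicate p 1 ++ [2])) := by
          simpa using ih.append_append [2, 1] []
      KEquiv _ _ := by
          simpa [List.replicate_succ] using
            (kEquiv_two_one_replicate p).append_append [] (List.replicate p 1 ++ [2])

/-- Reading a word from right to left, each `2` is paired with a still unpaired `1` to its right
if there is one; the state counts the unpaired `1`s and `2`s. Letters other than `1` are read
as `2`. -/
def pairStep (x : ℕ) (p : ℕ × ℕ) : ℕ × ℕ :=
  if x = 1 then (p.1 + 1, p.2) else if p.1 = 0 then (0, p.2 + 1) else (p.1 - 1, p.2)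

def unpaired (w : List ℕ) : ℕ × ℕ := w.foldr pairStep (0, 0)

lemma unpaired_cons (x : ℕ) (w : List ℕ) : unpaired (x :: w) = pairStep x (unpaired w) := rfl

lemma unpaired_append (u v : List ℕ) : unpaired (u ++ v) = u.foldr pairStep (unpaired v) :=
  List.foldr_append

def absorbOne (p : ℕ × ℕ) : ℕ × ℕ := if p.2 = 0 then (p.1 + 1, 0) else (p.1, p.2 - 1)

lemma pairStep_one_eq_absorbOne_iff (p : ℕ × ℕ) : pairStep 1 p = absorbOne p ↔ p.2 = 0 := by
  by_cases h : p.2 = 0 <;> simp [pairStep, absorbOne, h]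

lemma pairStep_absorbOne (x : ℕ) (p : ℕ × ℕ) :
    pairStep x (absorbOne p) = absorbOne (pairStep x p) := by
  obtain ⟨a, b⟩ := p
  simp only [pairStep, absorbOne]
  split_ifs <;> simp_all <;> omega

/-- A `1` appended on the right is read first, and pairs with the first `2` that would otherwise
stay unpaired. -/
lemma unpaired_append_one (w : List ℕ) : unpaired (w ++ [1]) = absorbOne (unpaired w) := by
  rw [unpaired_append]
  exact List.foldr_hom absorbOne (init := (0, 0)) pairStep_absorbOne

lemma foldr_pairStep_121 (p : ℕ × ℕ) :
    [1, 2, 1].foldr pairStep p = [2, 1, 1].foldr pairStep p := by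
  obtain ⟨a, b⟩ := p
  simp only [List.foldr, pairStep]
  split_ifs <;> simp_all

lemma foldr_pairStep_212 (p : ℕ × ℕ) :
    [2, 1, 2].foldr pairStep p = [2, 2, 1].foldr pairStep p := by
  obtain ⟨a, b⟩ := p
  simp only [List.foldr, pairStep]
  split_ifs <;> simp_all

lemma unpaired_append_append {m m' : List ℕ} (h : ∀ p, m.foldr pairStep p = m'.foldr pairStep p)
    (x y : List ℕ) : unpaired (x ++ m ++ y) = unpaired (x ++ m' ++ y) := by
  simp only [List.append_assoc, unpaired_append, h]

lemma KStep.unpaired_eq {u v : List ℕ} (h : KStep u v) (hu : ∀ x ∈ u, x = 1 ∨ x = 2) :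
    unpaired u = unpaired v := by
  cases h with
  | k1 x y a b c hab hbc =>
    obtain ⟨rfl, rfl, rfl⟩ : a = 1 ∧ b = 1 ∧ c = 2 := by
      have := hu a (by simp); have := hu b (by simp); have := hu c (by simp); omega
    exact unpaired_append_append foldr_pairStep_121 x y
  | k2 x y a b c hab hbc =>
    obtain ⟨rfl, rfl, rfl⟩ : a = 1 ∧ b = 2 ∧ c = 2 := by
      have := hu a (by simp); have := hu b (by simp); have := hu c (by simp); omega
    exact unpaired_append_append foldr_pairStep_212 x y

lemma KEquiv.unpaired_eq {u v : List ℕ} (h : KEquiv u v) (hu : ∀ x ∈ u, x = 1 ∨ x = 2) :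
    unpaired u = unpaired v := by
  induction h with
  | rel x y hxy => exact hxy.unpaired_eq hu
  | refl x => rfl
  | symm x y hxy ih => exact (ih fun z hz => hu z ((KEquiv.perm hxy).subset hz)).symm
  | trans x y z hxy _ ih₁ ih₂ =>
    exact (ih₁ hu).trans (ih₂ fun z hz => hu z ((KEquiv.perm hxy).symm.subset hz))

lemma unpaired_fst_le_count (w : List ℕ) : (unpaired w).1 ≤ w.count 1 := by
  induction w with
  | nil => simp [unpaired]
  | cons x t ih =>
    simp only [unpaired_cons, pairStep, List.count_cons, beq_iff_eq]
    split_ifs <;> omega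

lemma count_one_add_unpaired_snd {w : List ℕ} (hw : ∀ x ∈ w, x = 1 ∨ x = 2) :
    w.count 1 + (unpaired w).2 = w.count 2 + (unpaired w).1 := by
  induction w with
  | nil => simp [unpaired]
  | cons x t ih =>
    have ht := ih fun z hz => hw z (List.mem_cons_of_mem x hz)
    rcases hw x List.mem_cons_self with rfl | rfl <;>
      simp only [unpaired_cons, pairStep, List.count_cons] <;> split_ifs <;> simp_all <;> omega

lemma snd_le_pairStep_snd (x : ℕ) (p : ℕ × ℕ) : p.2 ≤ (pairStep x p).2 := by
  unfold pairStep
  split_ifs <;> simp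

lemma unpaired_snd_le_of_suffix {s w : List ℕ} (h : s <:+ w) :
    (unpaired s).2 ≤ (unpaired w).2 := by
  obtain ⟨t, rfl⟩ := h
  rw [unpaired_append]
  induction t with
  | nil => rfl
  | cons x t ih => exact ih.trans (snd_le_pairStep_snd x _)

lemma unpaired_snd_eq_zero_iff {w : List ℕ} (hw : ∀ x ∈ w, x = 1 ∨ x = 2) :
    (unpaired w).2 = 0 ↔ ∀ s, s <:+ w → s.count 2 ≤ s.count 1 := by
  refine ⟨fun h s hs => ?_, fun hy => ?_⟩
  · have := unpaired_snd_le_of_suffix hs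
    have := count_one_add_unpaired_snd fun x hx => hw x (hs.subset hx)
    omega
  induction w with
  | nil => rfl
  | cons x t ih =>
    have hwt : ∀ z ∈ t, z = 1 ∨ z = 2 := fun z hz => hw z (List.mem_cons_of_mem x hz)
    have ht := ih hwt fun s hs => hy s (hs.trans (List.suffix_cons x t))
    have hcount := count_one_add_unpaired_snd hwt
    have hxt := hy (x :: t) List.suffix_rfl
    rcases hw x List.mem_cons_self with rfl | rfl <;>
      simp only [unpaired_cons, pairStep, List.count_cons] at * <;> split_ifs <;> simp_all

/-- The row reading word of the insertion tableau of a word in `1, 2`: a second row of `2`s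
above the first row `1 ⋯ 1 2 ⋯ 2`. -/
def canon (w : List ℕ) : List ℕ :=
  List.replicate (w.count 1 - (unpaired w).1) 2 ++ List.replicate (w.count 1) 1 ++
    List.replicate (unpaired w).2 2

lemma kEquiv_cons_canon {x : ℕ} (hx : x = 1 ∨ x = 2) (t : List ℕ) :
    KEquiv (x :: canon t) (canon (x :: t)) := by
  rcases hx with rfl | rfl
  · simpa [canon, unpaired_cons, pairStep] using
      (kEquiv_one_cons_replicate (Nat.sub_le (t.count 1) (unpaired t).1)).append_append []
        (List.replicate (unpaired t).2 2)
  rcases Nat.eq_zero_or_pos (unpaired t).1 with h | h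
  · simpa [canon, unpaired_cons, pairStep, h, List.replicate_succ] using
      (kEquiv_replicate_two_succ (t.count 1)).append_append []
        (List.replicate (unpaired t).2 2)
  · have hle := unpaired_fst_le_count t
    have : t.count 1 - ((unpaired t).1 - 1) = t.count 1 - (unpaired t).1 + 1 := by omega
    simpa [canon, unpaired_cons, pairStep, h.ne', this, List.replicate_succ] using
      KEquiv.refl (2 :: canon t)

lemma kEquiv_canon {w : List ℕ} (hw : ∀ x ∈ w, x = 1 ∨ x = 2) : KEquiv w (canon w) := by
  induction w with
  | nil => exact KEquiv.refl _
  | cons x t ih =>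
    have ht := ih fun z hz => hw z (List.mem_cons_of_mem x hz)
    exact (ht.cons x).trans (kEquiv_cons_canon (hw x List.mem_cons_self) t)

lemma kEquiv_iff_perm_and_unpaired_eq {u v : List ℕ} (hu : ∀ x ∈ u, x = 1 ∨ x = 2)
    (hv : ∀ x ∈ v, x = 1 ∨ x = 2) :
    KEquiv u v ↔ u.Perm v ∧ unpaired u = unpaired v := by
  refine ⟨fun h => ⟨h.perm, h.unpaired_eq hu⟩, fun ⟨hp, h⟩ => ?_⟩
  have hcanon : canon u = canon v := by rw [canon, canon, hp.count_eq, h]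
  exact (kEquiv_canon hu).trans (hcanon ▸ (kEquiv_canon hv).symm)

end Plactic

open Plactic in
theorem stmt_8 (w : List ℕ) (hw : ∀ x ∈ w, x = 1 ∨ x = 2) :
    w ∈ Cent [1] ↔ ∀ s : List ℕ, s.IsSuffix w → s.count 2 ≤ s.count 1 := by
  have h1w : ∀ x ∈ 1 :: w, x = 1 ∨ x = 2 := by simpa using hw
  have hw1 : ∀ x ∈ w ++ [1], x = 1 ∨ x = 2 := by simpa [or_imp, forall_and] using hw
  change KEquiv (1 :: w) (w ++ [1]) ↔ _
  rw [kEquiv_iff_perm_and_unpaired_eq h1w hw1, ← unpaired_snd_eq_zero_iff hw, unpaired_cons,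
    unpaired_append_one, ← pairStep_one_eq_absorbOne_iff]
  exact and_iff_right (List.perm_append_singleton 1 w).symm
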